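/- Let π ∈ S_n avoid 132, and suppose σ, τ ∈ [e, π] (interval in the right weak order) with σ ≠ τ. If there exists β ∈ [e, π] with τ ⋗ β in the right weak order (β = τs_m) and β ⋖ σ in the strong Bruhat order (σ = βt_{ij}), then α = σs_m satisfies τ ⋖ α in the strong Bruhat order, α ⋗ σ in the right weak order, and α ∈ [e, π]. -/

import Mathlib

open Equiv

/-- The adjacent transposition `s i`, swapping positions `i` and `i+1` (0-indexed). -/
def simpleT {n : ℕ} (i : Fin n) : Equiv.Perm (Fin (n+1)) := Equiv.swap i.castSucc i.succ

noncomputable def len {n : ℕ} (σ : Equiv.Perm (Fin (n+1))) : ℕ :=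
  sInf {k | ∃ l : List (Fin n), l.length = k ∧ (l.map simpleT).prod = σ}

def weakCov {n : ℕ} (σ τ : Equiv.Perm (Fin (n+1))) : Prop :=
  ∃ i : Fin n, τ = σ * simpleT i ∧ len τ = len σ + 1

def weakLE {n : ℕ} : Equiv.Perm (Fin (n+1)) → Equiv.Perm (Fin (n+1)) → Prop :=
  Relation.ReflTransGen weakCov

def contains132 {m : ℕ} (σ : Equiv.Perm (Fin m)) : Prop :=
  ∃ i₁ i₂ i₃ : Fin m, i₁ < i₂ ∧ i₂ < i₃ ∧ σ i₁ < σ i₃ ∧ σ i₃ < σ i₂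

/-!
Encode a permutation `w` by its inversion set: the pairs of values `a < b` that `w` puts in
the wrong order. Right multiplication by an adjacent transposition adds or removes exactly one
such pair, so the Coxeter length is the number of inversions and the right weak order is
inclusion of inversion sets. Right multiplication by a transposition `(i j)` with `i < j` and
`w i < w j` gains one inversion, plus two for every position between `i` and `j` whose value
lies between `w i` and `w j`; so a Bruhat cover `β ⋖ β (i j)` has `β i < β j` and no such
position.

With `p = m`, `q = m + 1`, the claim reduces to `(σ p, σ q)` being an inversion of `π`.
According to how `{i, j}` meets `{p, q}`, this pair is either an inversion of `τ`, or the
composite of an inversion of `σ` with the inversion `(τ q, τ p)` of `τ`; since inversion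
sets are transitive, in every case it is an inversion of `π`.
-/

open Finset

section Inversions

variable {N : ℕ}

def inversions (w : Perm (Fin N)) : Finset (Fin N × Fin N) :=
  univ.filter fun p => p.1 < p.2 ∧ w⁻¹ p.2 < w⁻¹ p.1

lemma mem_inversions {w : Perm (Fin N)} {a b : Fin N} :
    (a, b) ∈ inversions w ↔ a < b ∧ w⁻¹ b < w⁻¹ a := by
  simp [inversions]

lemma apply_mem_inversions {w : Perm (Fin N)} {x y : Fin N} (hxy : x < y) (h : w y < w x) :
    (w y, w x) ∈ inversions w := by
  simpa [mem_inversions] using ⟨h, hxy⟩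

lemma inversions_one : inversions (1 : Perm (Fin N)) = ∅ := by
  ext ⟨a, b⟩
  simp only [mem_inversions, inv_one, Perm.one_apply, notMem_empty, iff_false, not_and, not_lt]
  exact le_of_lt

lemma inversions_trans {w : Perm (Fin N)} {a b c : Fin N} (hab : (a, b) ∈ inversions w)
    (hbc : (b, c) ∈ inversions w) : (a, c) ∈ inversions w := by
  rw [mem_inversions] at *
  exact ⟨hab.1.trans hbc.1, hbc.2.trans hab.2⟩

lemma inversions_mul_swap_of_lt {w : Perm (Fin N)} {p q : Fin N} (hpq : (q : ℕ) = p + 1)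
    (h : w p < w q) : inversions (w * swap p q) = insert (w p, w q) (inversions w) := by
  ext ⟨a, b⟩
  obtain ⟨x, rfl⟩ := w.surjective a
  obtain ⟨y, rfl⟩ := w.surjective b
  simp only [mem_inversions, mem_insert, Prod.mk.injEq, mul_inv_rev, swap_inv, Perm.mul_apply,
    Perm.coe_inv, symm_apply_apply, w.injective.eq_iff]
  rw [swap_apply_def, swap_apply_def]
  rcases eq_or_ne x y with rfl | hxy
  · simp only [lt_self_iff_false, and_false, or_false, false_iff, not_and]
    rintro rfl rfl
    omega
  have := w.injective.ne hxy
  split_ifs <;> subst_vars <;>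
    simp only [Fin.lt_def, Fin.ext_iff, true_and, true_or, iff_true] at this h ⊢ <;> omega

lemma apply_notMem_inversions {w : Perm (Fin N)} {x y : Fin N} (hxy : x < y) :
    (w x, w y) ∉ inversions w := by
  simpa [mem_inversions] using fun _ => hxy.le

lemma card_inversions_mul_swap_of_lt {w : Perm (Fin N)} {p q : Fin N} (hpq : (q : ℕ) = p + 1)
    (h : w p < w q) : #(inversions (w * swap p q)) = #(inversions w) + 1 := by
  rw [inversions_mul_swap_of_lt hpq h,
    card_insert_of_notMem (apply_notMem_inversions (by omega))]

lemma card_inversions_mul_swap_of_gt {w : Perm (Fin N)} {p q : Fin N} (hpq : (q : ℕ) = p + 1)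
    (h : w q < w p) : #(inversions (w * swap p q)) + 1 = #(inversions w) := by
  have key := card_inversions_mul_swap_of_lt (w := w * swap p q) hpq (by simpa using h)
  rw [mul_swap_mul_self] at key
  exact key.symm

lemma card_inversions_mul_swap_le {w : Perm (Fin N)} {p q : Fin N} (hpq : (q : ℕ) = p + 1) :
    #(inversions (w * swap p q)) ≤ #(inversions w) + 1 := by
  rcases lt_or_gt_of_ne (w.injective.ne (Fin.ne_of_val_ne (by omega) : p ≠ q)) with h | h
  · exact (card_inversions_mul_swap_of_lt hpq h).le
  · linarith [card_inversions_mul_swap_of_gt hpq h]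

lemma card_inversions_le_mul_swap_add_one {w : Perm (Fin N)} {p q : Fin N}
    (hpq : (q : ℕ) = p + 1) : #(inversions w) ≤ #(inversions (w * swap p q)) + 1 := by
  simpa using card_inversions_mul_swap_le (w := w * swap p q) hpq

lemma card_inversions_lt_mul_swap {w : Perm (Fin N)} {i j : Fin N} (hij : i < j)
    (h : w i < w j) : #(inversions w) < #(inversions (w * swap i j)) := by
  by_cases hadj : (j : ℕ) = i + 1
  · rw [card_inversions_mul_swap_of_lt hadj h]; omega
  set k : Fin N := ⟨i + 1, by omega⟩
  have hik : i < k := Fin.lt_def.2 (by simp [k])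
  have hkj : k < j := Fin.lt_def.2 (by simp only [k]; omega)
  have hk : (k : ℕ) = i + 1 := rfl
  -- Conjugate by the adjacent swap `swap i k`: its two factors change the count by `± 1`,
  -- and they cannot both decrease it.
  rw [← swap_mul_swap_mul_swap hkj.ne' hij.ne', swap_comm k i, swap_comm j k, ← mul_assoc,
    ← mul_assoc]
  have hmid := card_inversions_lt_mul_swap (w := w * swap i k) hkj
    (by simpa [swap_apply_of_ne_of_ne hij.ne' hkj.ne'] using h)
  set v := w * swap i k * swap k j
  rcases lt_or_gt_of_ne (w.injective.ne hik.ne) with hwik | hwki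
  · have hfirst := card_inversions_mul_swap_of_lt hk hwik
    have hlast := card_inversions_le_mul_swap_add_one (w := v) hk
    omega
  · have hfirst := card_inversions_mul_swap_of_gt hk hwki
    have hvik : v i < v k := by
      simpa [v, swap_apply_of_ne_of_ne hik.ne hij.ne, swap_apply_of_ne_of_ne hij.ne' hkj.ne']
        using hwki.trans h
    have hlast := card_inversions_mul_swap_of_lt hk hvik
    omega
termination_by (j : ℕ) - i

lemma card_inversions_add_three_le_mul_swap {w : Perm (Fin N)} {i j k : Fin N} (hik : i < k)
    (hkj : k < j) (hwik : w i < w k) (hwkj : w k < w j) :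
    #(inversions w) + 3 ≤ #(inversions (w * swap i j)) := by
  have hij := hik.trans hkj
  -- `swap i j = swap i k * swap k j * swap i k`, and each of the three swaps is ascending.
  rw [← swap_mul_swap_mul_swap hkj.ne' hij.ne', swap_comm k i, swap_comm j k, ← mul_assoc,
    ← mul_assoc]
  have h₁ := card_inversions_lt_mul_swap hik hwik
  have h₂ := card_inversions_lt_mul_swap (w := w * swap i k) hkj
    (by simpa [swap_apply_of_ne_of_ne hij.ne' hkj.ne'] using hwik.trans hwkj)
  have h₃ := card_inversions_lt_mul_swap (w := w * swap i k * swap k j) hik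
    (by simpa [swap_apply_of_ne_of_ne hik.ne hij.ne, swap_apply_of_ne_of_ne hij.ne' hkj.ne']
      using hwkj)
  omega

lemma exists_ascent_mem_inversions {n : ℕ} {σ π : Perm (Fin (n + 1))}
    (hsub : inversions σ ⊆ inversions π) (hne : σ ≠ π) :
    ∃ m : Fin n, σ m.castSucc < σ m.succ ∧ (σ m.castSucc, σ m.succ) ∈ inversions π := by
  by_contra! h
  -- Otherwise `π⁻¹ * σ` is increasing, hence the identity.
  have hmono : StrictMono ⇑(π⁻¹ * σ) := by
    refine Fin.strictMono_iff_lt_succ.2 fun m => ?_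
    have hmp : m.castSucc < m.succ := Fin.castSucc_lt_succ
    rcases lt_or_gt_of_ne (σ.injective.ne hmp.ne) with hlt | hgt
    · have hnot := h m hlt
      rw [mem_inversions, not_and, not_lt] at hnot
      exact (hnot hlt).lt_of_ne ((π⁻¹ * σ).injective.ne hmp.ne)
    · exact (mem_inversions.1 (hsub (apply_mem_inversions hmp hgt))).2
  exact hne (inv_mul_eq_one.1 (Perm.ext fun x => congrFun hmono.eq_id x)).symm

end Inversions

section CoxeterLength

variable {n : ℕ}

lemma inversions_mul_simpleT_of_lt {w : Perm (Fin (n + 1))} {m : Fin n}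
    (h : w m.castSucc < w m.succ) :
    inversions (w * simpleT m) = insert (w m.castSucc, w m.succ) (inversions w) :=
  inversions_mul_swap_of_lt (by simp) h

lemma card_inversions_mul_simpleT_of_lt {w : Perm (Fin (n + 1))} {m : Fin n}
    (h : w m.castSucc < w m.succ) : #(inversions (w * simpleT m)) = #(inversions w) + 1 :=
  card_inversions_mul_swap_of_lt (by simp) h

def AscentStep (u v : Perm (Fin (n + 1))) : Prop :=
  ∃ m : Fin n, u m.castSucc < u m.succ ∧ v = u * simpleT m

lemma reflTransGen_ascentStep_of_inversions_subset {σ π : Perm (Fin (n + 1))}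
    (hsub : inversions σ ⊆ inversions π) : Relation.ReflTransGen AscentStep σ π := by
  by_cases hσπ : σ = π
  · exact hσπ ▸ .refl
  obtain ⟨m, hasc, hmem⟩ := exists_ascent_mem_inversions hsub hσπ
  have hsub' : inversions (σ * simpleT m) ⊆ inversions π := by
    rw [inversions_mul_simpleT_of_lt hasc]
    exact insert_subset hmem hsub
  exact .head ⟨m, hasc, rfl⟩ (reflTransGen_ascentStep_of_inversions_subset hsub')
termination_by #(inversions π) - #(inversions σ)
decreasing_by
  have hle := card_le_card hsub'
  rw [card_inversions_mul_simpleT_of_lt hasc] at hle ⊢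
  omega

lemma exists_word_length_eq_card_inversions (π : Perm (Fin (n + 1))) :
    ∃ l : List (Fin n), l.length = #(inversions π) ∧ (l.map simpleT).prod = π := by
  have hchain : Relation.ReflTransGen AscentStep 1 π :=
    reflTransGen_ascentStep_of_inversions_subset (by simp [inversions_one])
  induction hchain with
  | refl => exact ⟨[], by simp [inversions_one], rfl⟩
  | tail _ hstep ih =>
    obtain ⟨m, hasc, rfl⟩ := hstep
    obtain ⟨l, hl, hprod⟩ := ih
    exact ⟨l ++ [m], by simp [hl, card_inversions_mul_simpleT_of_lt hasc], by simp [hprod]⟩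

lemma card_inversions_le_length {σ : Perm (Fin (n + 1))} {l : List (Fin n)}
    (hl : (l.map simpleT).prod = σ) : #(inversions σ) ≤ l.length := by
  induction l using List.reverseRecOn generalizing σ with
  | nil => simp [← hl, inversions_one]
  | append_singleton l m ih =>
    subst hl
    simp only [List.map_append, List.map_singleton, List.prod_append, List.prod_singleton,
      List.length_append, List.length_singleton]
    exact (card_inversions_mul_swap_le (by simp)).trans (by simpa using ih rfl)

lemma len_eq_card_inversions (σ : Perm (Fin (n + 1))) : len σ = #(inversions σ) := by
  obtain ⟨l, hl, hprod⟩ := exists_word_length_eq_card_inversions σ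
  refine le_antisymm (Nat.sInf_le ⟨l, hl, hprod⟩) (le_csInf ⟨_, l, hl, hprod⟩ ?_)
  rintro k ⟨l', rfl, hprod'⟩
  exact card_inversions_le_length hprod'

end CoxeterLength

section BruhatCover

variable {n : ℕ}

lemma lt_of_len_mul_swap {w : Perm (Fin (n + 1))} {i j : Fin (n + 1)} (hij : i < j)
    (h : len (w * swap i j) = len w + 1) : w i < w j := by
  rw [len_eq_card_inversions, len_eq_card_inversions] at h
  refine (le_of_not_gt fun hgt => ?_).lt_of_ne (w.injective.ne hij.ne)
  have := card_inversions_lt_mul_swap (w := w * swap i j) hij (by simpa using hgt)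
  rw [mul_swap_mul_self] at this
  omega

lemma not_between_of_len_mul_swap {w : Perm (Fin (n + 1))} {i j k : Fin (n + 1)}
    (h : len (w * swap i j) = len w + 1) (hik : i < k) (hkj : k < j) :
    ¬(w i < w k ∧ w k < w j) := by
  rintro ⟨hwik, hwkj⟩
  have := card_inversions_add_three_le_mul_swap hik hkj hwik hwkj
  rw [len_eq_card_inversions, len_eq_card_inversions] at h
  omega

end BruhatCover

section WeakOrder

variable {n : ℕ}

lemma inversions_subset_of_weakCov {u v : Perm (Fin (n + 1))} (h : weakCov u v) :
    inversions u ⊆ inversions v := by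
  obtain ⟨m, rfl, hlen⟩ := h
  rw [inversions_mul_simpleT_of_lt (lt_of_len_mul_swap Fin.castSucc_lt_succ hlen)]
  exact subset_insert _ _

lemma weakCov_of_ascentStep {u v : Perm (Fin (n + 1))} (h : AscentStep u v) : weakCov u v := by
  obtain ⟨m, hasc, rfl⟩ := h
  refine ⟨m, rfl, ?_⟩
  rw [len_eq_card_inversions, len_eq_card_inversions, card_inversions_mul_simpleT_of_lt hasc]

theorem weakLE_iff_inversions_subset {σ π : Perm (Fin (n + 1))} :
    weakLE σ π ↔ inversions σ ⊆ inversions π := by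
  refine ⟨fun h => ?_, fun h => Relation.ReflTransGen.mono (fun _ _ => weakCov_of_ascentStep)
    _ _ (reflTransGen_ascentStep_of_inversions_subset h)⟩
  induction h with
  | refl => exact subset_rfl
  | tail _ hcov ih => exact ih.trans (inversions_subset_of_weakCov hcov)

end WeakOrder

lemma mem_inversions_of_down_up {N : ℕ} {π σ τ β : Perm (Fin N)} {p q i j : Fin N}
    (hpq : (q : ℕ) = p + 1) (hij : i < j) (hne : ¬(i = p ∧ j = q))
    (hβ : β = τ * swap p q) (hσ : σ = β * swap i j) (hτ : τ q < τ p) (hβij : β i < β j)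
    (hmid : ∀ k, i < k → k < j → ¬(β i < β k ∧ β k < β j))
    (hτπ : inversions τ ⊆ inversions π) (hσπ : inversions σ ⊆ inversions π) :
    (σ p, σ q) ∈ inversions π := by
  have hpq' : p < q := Fin.lt_def.2 (by omega)
  have hβp : β p = τ q := by simp [hβ]
  have hβq : β q = τ p := by simp [hβ]
  have hβ_of_ne {x : Fin N} (hxp : x ≠ p) (hxq : x ≠ q) : β x = τ x := by
    simp [hβ, swap_apply_of_ne_of_ne hxp hxq]
  have hσ_of_ne {x : Fin N} (hxi : x ≠ i) (hxj : x ≠ j) : σ x = β x := by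
    simp [hσ, swap_apply_of_ne_of_ne hxi hxj]
  have hσi : σ i = β j := by simp [hσ]
  have hσj : σ j = β i := by simp [hσ]
  have hτpq : (τ q, τ p) ∈ inversions π := hτπ (apply_mem_inversions hpq' hτ)
  by_cases hip : i = p
  · subst i
    have hjq : j ≠ q := fun h => hne ⟨rfl, h⟩
    have hqj : q < j := lt_of_le_of_ne (Fin.le_def.2 (by omega)) (Ne.symm hjq)
    have hτj : τ j < τ p := by
      have hnot := hmid q hpq' hqj
      rw [hβp, hβq, hβ_of_ne hij.ne' hjq, not_and, not_lt] at hnot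
      exact (hnot hτ).lt_of_ne (τ.injective.ne hij.ne')
    rw [hσi, hσ_of_ne hpq'.ne' (Ne.symm hjq), hβq, hβ_of_ne hij.ne' hjq]
    exact hτπ (apply_mem_inversions hij hτj)
  by_cases hjq : j = q
  · subst j
    have hip' : i < p := lt_of_le_of_ne (Fin.le_def.2 (by omega)) hip
    have hτi : τ q < τ i := by
      have hnot := hmid p hip' hpq'
      rw [hβp, hβq, hβ_of_ne hip (hip'.trans hpq').ne, not_and', not_lt] at hnot
      exact (hnot hτ).lt_of_ne (τ.injective.ne (hip'.trans hpq').ne')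
    rw [hσ_of_ne (Ne.symm hip) hpq'.ne, hσj, hβp, hβ_of_ne hip (hip'.trans hpq').ne]
    exact hτπ (apply_mem_inversions hij hτi)
  by_cases hiq : i = q
  · subst i
    rw [hσ_of_ne hpq'.ne (hpq'.trans hij).ne, hσi, hβp]
    have hσjq : (σ j, σ q) ∈ inversions π := by
      refine hσπ (apply_mem_inversions hij ?_)
      rw [hσi, hσj]
      exact hβij
    rw [hσj, hσi, hβq] at hσjq
    exact inversions_trans hτpq hσjq
  by_cases hjp : j = p
  · subst j
    have hqi : q ≠ i := (hij.trans hpq').ne'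
    rw [hσj, hσ_of_ne hqi hpq'.ne', hβq]
    have hσpi : (σ p, σ i) ∈ inversions π := by
      refine hσπ (apply_mem_inversions hij ?_)
      rw [hσi, hσj]
      exact hβij
    rw [hσj, hσi, hβp] at hσpi
    exact inversions_trans hσpi hτpq
  rw [hσ_of_ne (Ne.symm hip) (Ne.symm hjp), hσ_of_ne (Ne.symm hiq) (Ne.symm hjq), hβp, hβq]
  exact hτpq

theorem up_down_path_exists_general {n : ℕ} (π σ τ β : Equiv.Perm (Fin (n+1)))
    (hσπ : weakLE σ π) (hτπ : weakLE τ π)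
    (hne : σ ≠ τ) (m : Fin n) (i j : Fin (n+1)) (hij : i ≠ j)
    (hβ : β = τ * simpleT m) (hβτ : len τ = len β + 1)
    (hσ : σ = β * Equiv.swap i j) (hβσ : len σ = len β + 1) :
    (∃ a b : Fin (n+1), a ≠ b ∧ σ * simpleT m = τ * Equiv.swap a b) ∧
      len (σ * simpleT m) = len τ + 1 ∧
      len (σ * simpleT m) = len σ + 1 ∧
      weakLE (σ * simpleT m) π := by
  wlog hlt : i < j generalizing i j
  · exact this j i hij.symm (by rwa [swap_comm]) (hij.symm.lt_of_le (not_lt.1 hlt))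
  have hτβ : τ = β * simpleT m := by rw [hβ, simpleT, mul_swap_mul_self]
  have hτ : τ m.succ < τ m.castSucc := by
    have hβasc := lt_of_len_mul_swap (w := β) Fin.castSucc_lt_succ
      (by rwa [← simpleT, ← hτβ])
    simpa [hβ, simpleT] using hβasc
  have hpair : (σ m.castSucc, σ m.succ) ∈ inversions π :=
    mem_inversions_of_down_up (by simp) hlt
      (fun ⟨hi, hj⟩ => hne (by rw [hσ, hi, hj, hτβ, simpleT])) hβ hσ hτ
      (lt_of_len_mul_swap hlt (hσ ▸ hβσ))
      (fun _ => not_between_of_len_mul_swap (hσ ▸ hβσ))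
      (weakLE_iff_inversions_subset.1 hτπ) (weakLE_iff_inversions_subset.1 hσπ)
  have hasc := (mem_inversions.1 hpair).1
  have hlen : len (σ * simpleT m) = len σ + 1 := by
    rw [len_eq_card_inversions, len_eq_card_inversions, card_inversions_mul_simpleT_of_lt hasc]
  refine ⟨⟨simpleT m i, simpleT m j, (simpleT m).injective.ne hij, ?_⟩, by omega, hlen, ?_⟩
  · rw [swap_apply_apply, hσ, hβ, simpleT, swap_inv]
    simp only [mul_assoc]
  · rw [weakLE_iff_inversions_subset, inversions_mul_simpleT_of_lt hasc]
    exact insert_subset hpair (weakLE_iff_inversions_subset.1 hσπ)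

/-- If `τ ⋗ β = τ sₘ` (weak order) and `β ⋖ σ = β tᵢⱼ` (strong order) with everything in
`[e, π]` for a 132-avoiding `π`, then `α = σ sₘ` satisfies `τ ⋖ α` in the strong order,
`σ ⋖ α` in the weak order, and `α ∈ [e, π]`. -/
theorem up_down_path_exists {n : ℕ} (π σ τ β : Equiv.Perm (Fin (n+1)))
    (hπ : ¬ contains132 π) (hσπ : weakLE σ π) (hτπ : weakLE τ π) (hβπ : weakLE β π)
    (hne : σ ≠ τ) (m : Fin n) (i j : Fin (n+1)) (hij : i ≠ j)
    (hβ : β = τ * simpleT m) (hβτ : len τ = len β + 1)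
    (hσ : σ = β * Equiv.swap i j) (hβσ : len σ = len β + 1) :
    (∃ a b : Fin (n+1), a ≠ b ∧ σ * simpleT m = τ * Equiv.swap a b) ∧
      len (σ * simpleT m) = len τ + 1 ∧
      len (σ * simpleT m) = len σ + 1 ∧
      weakLE (σ * simpleT m) π :=
  up_down_path_exists_general π σ τ β hσπ hτπ hne m i j hij hβ hβτ hσ hβσ
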